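/- For n ≥ 0, the formal derivative of φ*_n satisfies (1+αx) · (d/dx) φ*_n(x) = λ Σ_{ℓ=0}^{n} C(n,ℓ) φ*_ℓ(x) + φ*_n(x), as formal power series in x. -/

import Mathlib

open Finset

/-- The degenerate falling factorial `(x)_{n,α} = ∏_{i=0}^{n-1} (x - i·α)`. -/
def degFall {R : Type*} [CommRing R] (α x : R) (n : ℕ) : R :=
  ∏ i ∈ Finset.range n, (x - (i : R) * α)

/-- The ordinary falling factorial `(x)_n = x(x-1)⋯(x-n+1)`. -/
def fall {R : Type*} [CommRing R] (x : R) (n : ℕ) : R :=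
  ∏ i ∈ Finset.range n, (x - (i : R))

/-- Signed Stirling numbers of the first kind, via the standard recurrence. -/
def stirling1 : ℕ → ℕ → ℤ
  | 0, 0 => 1
  | 0, _ + 1 => 0
  | n + 1, 0 => -(n : ℤ) * stirling1 n 0
  | n + 1, k + 1 => stirling1 n k - (n : ℤ) * stirling1 n (k + 1)

/-- The Simsek numbers `y₁(n,k;λ) = (1/k!) Σ_{j=0}^{k} C(k,j) jⁿ λʲ`. -/
noncomputable def simsek {F : Type*} [Field F] (lam : F) (n k : ℕ) : F :=
  (k.factorial : F)⁻¹ * ∑ j ∈ Finset.range (k + 1),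
    (k.choose j : F) * (j : F) ^ n * lam ^ j

/-- The new type degenerate Simsek numbers
`y*₁,α(n,k;λ) = (1/k!) Σ_{ℓ=0}^{k} Σ_{j=0}^{ℓ} C(ℓ,j) α^{k-ℓ} s(k,ℓ) λʲ jⁿ`. -/
noncomputable def ystar {F : Type*} [Field F] (α lam : F) (n k : ℕ) : F :=
  (k.factorial : F)⁻¹ * ∑ ℓ ∈ Finset.range (k + 1), ∑ j ∈ Finset.range (ℓ + 1),
    (ℓ.choose j : F) * α ^ (k - ℓ) * ((stirling1 k ℓ : ℤ) : F) * lam ^ j * (j : F) ^ n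

/-- Auxiliary: `A(m,n) = Σ_j C(m,j) λ^j j^n`. -/
noncomputable def Afun {F : Type*} [Field F] (lam : F) (m n : ℕ) : F :=
  ∑ j ∈ Finset.range (m + 1), (m.choose j : F) * lam ^ j * (j : F) ^ n

lemma stirling1_eq_zero : ∀ n k : ℕ, n < k → stirling1 n k = 0 := by
  intro n
  induction n with
  | zero => intro k hk; obtain ⟨k, rfl⟩ := Nat.exists_eq_succ_of_ne_zero hk.ne'; rfl
  | succ n ih =>
      intro k hk
      cases k with
      | zero => omega
      | succ k =>
          rw [stirling1, ih k (by omega), ih (k+1) (by omega)]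
          ring

lemma Afun_succ {F : Type*} [Field F] (lam : F) (m n : ℕ) :
    Afun lam (m + 1) n =
      lam * ∑ ℓ ∈ Finset.range (n + 1), (n.choose ℓ : F) * Afun lam m ℓ + Afun lam m n := by
  have hbin : ∀ j : ℕ, ((j : F) + 1) ^ n =
      ∑ ℓ ∈ Finset.range (n + 1), (j : F) ^ ℓ * (n.choose ℓ : F) := fun j => by
    simpa using add_pow (j : F) 1 n
  have hswap : lam * ∑ ℓ ∈ Finset.range (n + 1), (n.choose ℓ : F) * Afun lam m ℓ =
      ∑ j ∈ Finset.range (m + 1), (m.choose j : F) * lam ^ (j + 1) * ((j : F) + 1) ^ n := by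
    unfold Afun
    simp only [Finset.mul_sum, hbin]
    rw [Finset.sum_comm]
    exact Finset.sum_congr rfl fun j _ => Finset.sum_congr rfl fun ℓ _ => by ring
  have htail : Afun lam m n =
      (∑ j ∈ Finset.range m, (m.choose (j+1) : F) * lam ^ (j + 1) * ((j : F) + 1) ^ n)
        + (0 : F) ^ n := by
    unfold Afun
    rw [Finset.sum_range_succ']
    push_cast
    simp
  have htail2 : (∑ j ∈ Finset.range (m+1), (m.choose (j+1) : F) * lam ^ (j + 1) * ((j : F) + 1) ^ n)
      = ∑ j ∈ Finset.range m, (m.choose (j+1) : F) * lam ^ (j + 1) * ((j : F) + 1) ^ n := by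
    rw [Finset.sum_range_succ, Nat.choose_succ_self]
    simp
  rw [hswap, htail]
  unfold Afun
  rw [Finset.sum_range_succ']
  push_cast [Nat.choose_succ_succ]
  simp only [add_mul, Finset.sum_add_distrib, Nat.choose_zero_right, Nat.cast_one, pow_zero,
    one_mul, Nat.succ_eq_add_one]
  rw [htail2]
  ring

lemma ystar_eq {F : Type*} [Field F] (α lam : F) (n k : ℕ) :
    ystar α lam n k = (k.factorial : F)⁻¹ *
      ∑ m ∈ Finset.range (k + 1),
        α ^ (k - m) * ((stirling1 k m : ℤ) : F) * Afun lam m n := by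
  unfold ystar Afun
  congr 1
  refine Finset.sum_congr rfl fun m _ => ?_
  rw [Finset.mul_sum]
  exact Finset.sum_congr rfl fun j _ => by ring

lemma sum_shift {F : Type*} [Field F] (α lam : F) (n k : ℕ) :
    ∑ m ∈ Finset.range (k + 1),
        α ^ (k - m) * ((stirling1 k (m+1) : ℤ) : F) * Afun lam (m+1) n
      + α ^ (k + 1) * ((stirling1 k 0 : ℤ) : F) * Afun lam 0 n
    = α * ∑ m ∈ Finset.range (k + 1),
        α ^ (k - m) * ((stirling1 k m : ℤ) : F) * Afun lam m n := by
  have h1 : ∑ m ∈ Finset.range k,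
        α ^ (k - m) * ((stirling1 k (m+1) : ℤ) : F) * Afun lam (m+1) n
      = ∑ m ∈ Finset.range k,
        α * (α ^ (k - (m+1)) * ((stirling1 k (m+1) : ℤ) : F) * Afun lam (m+1) n) := by
    refine Finset.sum_congr rfl fun m hm => ?_
    have hm' : m < k := Finset.mem_range.mp hm
    have he : k - (m + 1) + 1 = k - m := by omega
    rw [← he, pow_succ]
    ring
  rw [Finset.mul_sum,
    Finset.sum_range_succ' (fun m => α * (α ^ (k - m) * ((stirling1 k m : ℤ) : F) * Afun lam m n)) k,
    Finset.sum_range_succ (fun m => α ^ (k - m) * ((stirling1 k (m+1) : ℤ) : F) * Afun lam (m+1) n) k,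
    stirling1_eq_zero k (k+1) (by omega), Int.cast_zero, Nat.sub_zero]
  linear_combination h1

lemma key {F : Type*} [Field F] [CharZero F] (α lam : F) (n k : ℕ) :
    ((k : F) + 1) * ystar α lam n (k+1) + α * (k : F) * ystar α lam n k
      = lam * ∑ ℓ ∈ Finset.range (n + 1), (n.choose ℓ : F) * ystar α lam ℓ k
        + ystar α lam n k := by
  have hfac : ((k : F) + 1) * ((k+1).factorial : F)⁻¹ = ((k.factorial : F))⁻¹ := by
    have h : ((k+1).factorial : F) = ((k : F) + 1) * (k.factorial : F) := by
      rw [Nat.factorial_succ]; push_cast; ring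
    rw [h, mul_inv, ← mul_assoc, mul_inv_cancel₀ (by exact_mod_cast (Nat.succ_ne_zero k)), one_mul]
  have hRHS : lam * ∑ ℓ ∈ Finset.range (n + 1), (n.choose ℓ : F) * ystar α lam ℓ k
        + ystar α lam n k
      = (k.factorial : F)⁻¹ * ∑ m ∈ Finset.range (k + 1),
          α ^ (k - m) * ((stirling1 k m : ℤ) : F) * Afun lam (m+1) n := by
    simp only [ystar_eq, Afun_succ, mul_add, Finset.mul_sum, Finset.sum_add_distrib]
    congr 1
    rw [Finset.sum_comm]
    refine Finset.sum_congr rfl fun m _ => Finset.sum_congr rfl fun ℓ _ => by ring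
  rw [hRHS]
  rw [ystar_eq α lam n (k+1), ystar_eq α lam n k]
  rw [← mul_assoc, hfac]
  rw [Finset.sum_range_succ'
    (fun m => α ^ (k + 1 - m) * ((stirling1 (k+1) m : ℤ) : F) * Afun lam m n) (k+1)]
  have hst0 : ((stirling1 (k+1) 0 : ℤ) : F) = -(k:F) * ((stirling1 k 0 : ℤ):F) := by
    rw [stirling1]; push_cast; ring
  have hstS : ∀ m, ((stirling1 (k+1) (m+1) : ℤ) : F)
      = ((stirling1 k m : ℤ):F) - (k:F) * ((stirling1 k (m+1) : ℤ):F) := by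
    intro m; rw [stirling1]; push_cast; ring
  simp only [hstS, hst0, Nat.add_sub_cancel, Nat.sub_zero]
  have expand : ∀ m ∈ Finset.range (k+1),
      α ^ (k + 1 - (m+1)) * (((stirling1 k m : ℤ):F) - (k:F) * ((stirling1 k (m+1) : ℤ):F)) * Afun lam (m+1) n
      = α ^ (k - m) * ((stirling1 k m : ℤ):F) * Afun lam (m+1) n
        - (k:F) * (α ^ (k - m) * ((stirling1 k (m+1) : ℤ):F) * Afun lam (m+1) n) := by
    intro m _
    have : k + 1 - (m + 1) = k - m := by omega
    rw [this]; ring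
  rw [Finset.sum_congr rfl expand, Finset.sum_sub_distrib, ← Finset.mul_sum]
  have hs := sum_shift α lam n k
  linear_combination -((k.factorial : F)⁻¹ * (k:F)) * hs

open PowerSeries in
/-- the derivative formula
`(1+αx)·(d/dx)φ*ₙ(x) = λ Σ_{ℓ=0}^{n} C(n,ℓ) φ*_ℓ(x) + φ*ₙ(x)` as formal power
series in `x`. -/
theorem phiStar_derivative (F : Type*) [Field F] [CharZero F]
    (α lam : F) (n : ℕ) :
    (1 + C α * X) *
        PowerSeries.derivativeFun (PowerSeries.mk fun k => ystar α lam n k) =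
      C lam *
          ∑ ℓ ∈ Finset.range (n + 1),
            C (n.choose ℓ : F) * PowerSeries.mk (fun k => ystar α lam ℓ k) +
        PowerSeries.mk fun k => ystar α lam n k := by
  ext k
  simp only [show ∀ f : PowerSeries F, f.derivativeFun = PowerSeries.derivative F f from fun _ => rfl]
  rw [add_mul, one_mul, map_add, map_add, mul_assoc, PowerSeries.coeff_C_mul,
    PowerSeries.coeff_derivativeFun, PowerSeries.coeff_mk, PowerSeries.coeff_C_mul, map_sum]
  simp only [PowerSeries.coeff_C_mul, PowerSeries.coeff_mk]
  cases k with
  | zero =>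
      rw [PowerSeries.coeff_zero_X_mul]
      have h := key α lam n 0
      push_cast at h ⊢
      linear_combination h
  | succ k =>
      rw [PowerSeries.coeff_succ_X_mul, PowerSeries.coeff_derivativeFun, PowerSeries.coeff_mk]
      have h := key α lam n (k+1)
      push_cast at h ⊢
      linear_combination h
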